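/- arXiv:1609.03990 — 7 statements merged into one kernel-verified Lean document; each statement's English description precedes it below -/
import Mathlib

section
/- Let Φ : X → S(Y) be a strict set-valued mapping between metric spaces and f : Gr(Φ) → ℝ̄ satisfy: whenever xₙ → x in X, every sequence {yₙ} with yₙ ∈ Φ(xₙ) such that {f(xₙ,yₙ)} is bounded above has a limit point y ∈ Φ(x). Then all sublevel sets D_f(λ; Gr(Φ)) = {(x,y) ∈ Gr(Φ) : f(x,y) ≤ λ}, λ ∈ ℝ, are closed in X × Y if and only if f is lower semi-continuous on Gr(Φ). -/
open Filter Topology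

/-!
A point `p` outside a closed sublevel set `{f ≤ l}` with `l < f p` has a neighbourhood on which
`f > l`, which is lower semicontinuity. Conversely, if `(xₙ, yₙ) → (x, y)` inside `{f ≤ l}`,
condition (ii) yields a cluster point of `yₙ` in `Φ x`; in a Hausdorff space it must be `y`, so
`(x, y)` lies in the graph, and lower semicontinuity along the sequence gives `f (x, y) ≤ l`.
-/

theorem MapClusterPt.eq_of_tendsto {α ι : Type*} [TopologicalSpace α] [T2Space α]
    {F : Filter ι} {u : ι → α} {x y : α} (hx : MapClusterPt x F u) (hy : Tendsto u F (𝓝 y)) :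
    x = y :=
  eq_of_nhds_neBot (hx.neBot.mono (inf_le_inf_left _ hy))

theorem LowerSemicontinuousOn.le_of_tendsto {α β ι : Type*} [TopologicalSpace α] [LinearOrder β]
    {f : α → β} {s : Set α} {F : Filter ι} [F.NeBot] {u : ι → α} {x : α} {b : β}
    (hf : LowerSemicontinuousOn f s) (hx : x ∈ s) (hus : ∀ i, u i ∈ s)
    (hu : Tendsto u F (𝓝 x)) (hub : ∀ i, f (u i) ≤ b) : f x ≤ b := by
  have hu' : Tendsto u F (𝓝[s] x) :=
    tendsto_nhdsWithin_of_tendsto_nhds_of_eventually_within _ hu (.of_forall hus)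
  exact hf.frequently x hx b (hu'.frequently (.of_forall hub))

theorem lowerSemicontinuousOn_of_forall_isClosed_sublevel {α : Type*} [TopologicalSpace α]
    {f : α → EReal} {s : Set α} (hf : ∀ l : ℝ, IsClosed {p | p ∈ s ∧ f p ≤ l}) :
    LowerSemicontinuousOn f s := by
  intro p hp z hz
  obtain ⟨l, hzl, hlf⟩ := EReal.exists_between_coe_real hz
  have hp_notMem : p ∉ {q | q ∈ s ∧ f q ≤ l} := fun h ↦ h.2.not_gt hlf
  filter_upwards [nhdsWithin_le_nhds ((hf l).isOpen_compl.mem_nhds hp_notMem),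
    self_mem_nhdsWithin] with q hq hqs
  exact hzl.trans (not_le.1 fun h ↦ hq ⟨hqs, h⟩)

theorem isSeqClosed_graph_inter_sublevel {X Y : Type*} [TopologicalSpace X] [TopologicalSpace Y]
    [T2Space Y] {Φ : X → Set Y} {f : X × Y → EReal}
    (hii : ∀ (x : X) (xs : ℕ → X), Tendsto xs atTop (𝓝 x) →
      ∀ ys : ℕ → Y, (∀ n, ys n ∈ Φ (xs n)) →
        (∃ M : ℝ, ∀ n, f (xs n, ys n) ≤ (M : EReal)) →
        ∃ y ∈ Φ x, MapClusterPt y atTop ys)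
    (hf : LowerSemicontinuousOn f {p : X × Y | p.2 ∈ Φ p.1}) (l : ℝ) :
    IsSeqClosed {p : X × Y | p.2 ∈ Φ p.1 ∧ f p ≤ (l : EReal)} := by
  intro ps p hps hlim
  obtain ⟨y, hyΦ, hy⟩ := hii p.1 _ hlim.fst_nhds _ (fun n ↦ (hps n).1) ⟨l, fun n ↦ (hps n).2⟩
  obtain rfl : y = p.2 := hy.eq_of_tendsto hlim.snd_nhds
  exact ⟨hyΦ, hf.le_of_tendsto hyΦ (fun n ↦ (hps n).1) hlim (fun n ↦ (hps n).2)⟩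

theorem stmt2_general {X Y : Type*} [MetricSpace X] [MetricSpace Y]
    (Φ : X → Set Y)
    (f : X × Y → EReal)
    (hii : ∀ (x : X) (xs : ℕ → X), Tendsto xs atTop (𝓝 x) →
      ∀ ys : ℕ → Y, (∀ n, ys n ∈ Φ (xs n)) →
        (∃ M : ℝ, ∀ n, f (xs n, ys n) ≤ (M : EReal)) →
        ∃ y ∈ Φ x, MapClusterPt y atTop ys) :
    (∀ l : ℝ, IsClosed {p : X × Y | p.2 ∈ Φ p.1 ∧ f p ≤ (l : EReal)}) ↔
      LowerSemicontinuousOn f {p : X × Y | p.2 ∈ Φ p.1} :=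
  ⟨lowerSemicontinuousOn_of_forall_isClosed_sublevel,
    fun hf l ↦ (isSeqClosed_graph_inter_sublevel hii hf l).isClosed⟩

/-- Corollary 2.3: for a strict set-valued mapping `Φ` and `f` satisfying condition (ii),
all sublevel sets of `f` on `Gr(Φ)` are closed in `X × Y` iff `f` is lower
semicontinuous on `Gr(Φ)`. -/
theorem stmt2 {X Y : Type*} [MetricSpace X] [MetricSpace Y]
    (Φ : X → Set Y) (hstrict : ∀ x, (Φ x).Nonempty)
    (f : X × Y → EReal)
    (hii : ∀ (x : X) (xs : ℕ → X), Tendsto xs atTop (𝓝 x) →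
      ∀ ys : ℕ → Y, (∀ n, ys n ∈ Φ (xs n)) →
        (∃ M : ℝ, ∀ n, f (xs n, ys n) ≤ (M : EReal)) →
        ∃ y ∈ Φ x, MapClusterPt y atTop ys) :
    (∀ l : ℝ, IsClosed {p : X × Y | p.2 ∈ Φ p.1 ∧ f p ≤ (l : EReal)}) ↔
      LowerSemicontinuousOn f {p : X × Y | p.2 ∈ Φ p.1} :=
  stmt2_general Φ f hii
end

section
/- Let X, Y be metric spaces, Φ : X → 2^Y a set-valued mapping, and f : Gr(Φ) → ℝ̄. If f is lower semi-continuous on Gr(Φ) and Φ is upper semi-continuous and compact-valued at each x ∈ Dom Φ, then f is K-inf-compact on Gr(Φ). -/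
/-!
Over a compact set `K`, the graph of an upper hemicontinuous, compact-valued correspondence is
compact: an ultrafilter on the graph projects to one converging to some `x ∈ K`, and upper
hemicontinuity pushes its second projection into every neighbourhood of the compact set `Φ x`,
where it must then converge. A sublevel set of a function lower semicontinuous on the graph is
relatively closed, so its trace on this compact piece of the graph is compact.
-/

open Filter Topology Set

theorem IsCompact.exists_clusterPt_of_le_nhdsSet {Y : Type*} [TopologicalSpace Y] {K : Set Y}
    {l : Filter Y} [l.NeBot] (hK : IsCompact K) (hl : l ≤ 𝓝ˢ K) :
    ∃ y ∈ K, ClusterPt y l := by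
  by_contra! h
  have hdisj : Disjoint (𝓝ˢ K) l :=
    hK.disjoint_nhdsSet_left.2 fun y hy => by simpa [clusterPt_iff_not_disjoint] using h y hy
  exact ‹l.NeBot›.ne (disjoint_self.1 (hdisj.mono_left hl))

theorem UpperHemicontinuousOn.isCompact_graphOn {X Y : Type*} [TopologicalSpace X]
    [TopologicalSpace Y] {Φ : X → Set Y} {K : Set X} (hΦ : UpperHemicontinuousOn Φ K)
    (hΦK : ∀ x ∈ K, IsCompact (Φ x)) (hK : IsCompact K) :
    IsCompact {p : X × Y | p.1 ∈ K ∧ p.2 ∈ Φ p.1} := by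
  rw [isCompact_iff_ultrafilter_le_nhds]
  intro F hF
  have hFgraph : {p : X × Y | p.1 ∈ K ∧ p.2 ∈ Φ p.1} ∈ F := le_principal_iff.1 hF
  have hFK : Prod.fst ⁻¹' K ∈ F := mem_of_superset hFgraph fun p hp => hp.1
  obtain ⟨x, hxK, hx⟩ := hK.ultrafilter_le_nhds (F.map Prod.fst) (le_principal_iff.2 hFK)
  have hsnd : (F.map Prod.snd : Filter Y) ≤ 𝓝ˢ (Φ x) := by
    rw [Ultrafilter.coe_map, (hasBasis_nhdsSet _).ge_iff]
    rintro u ⟨hu, hΦu⟩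
    refine mem_map.2 ?_
    have hsub : ∀ᶠ p in (F : Filter (X × Y)), Φ p.1 ⊆ u :=
      (tendsto_nhdsWithin_iff.2 ⟨hx, hFK⟩).eventually (hΦ.forall_isOpen x hxK u hu hΦu)
    filter_upwards [hsub, hFgraph] with p hpu hp using hpu hp.2
  obtain ⟨y, hy, hFy⟩ := (hΦK x hxK).exists_clusterPt_of_le_nhdsSet hsnd
  refine ⟨(x, y), ⟨hxK, hy⟩, ?_⟩
  rw [nhds_prod_eq]
  exact le_prod.2 ⟨hx, Ultrafilter.clusterPt_iff.1 hFy⟩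

/-- Lemma 2.4(b): if `f` is lower semicontinuous on `Gr(Φ)` and `Φ` is upper
semicontinuous and compact-valued at each point of its domain, then `f` is
`K`-inf-compact on `Gr(Φ)`. -/
theorem stmt3 {X Y : Type*} [MetricSpace X] [MetricSpace Y]
    (Φ : X → Set Y) (f : X × Y → EReal)
    (hf : LowerSemicontinuousOn f {p : X × Y | p.2 ∈ Φ p.1})
    (husc : ∀ x ∈ {x | (Φ x).Nonempty}, ∀ G : Set Y, IsOpen G → Φ x ⊆ G →
      ∃ U ∈ 𝓝 x, ∀ x' ∈ U ∩ {x | (Φ x).Nonempty}, Φ x' ⊆ G)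
    (hcomp : ∀ x ∈ {x | (Φ x).Nonempty}, IsCompact (Φ x)) :
    ∀ C : Set X, C.Nonempty → IsCompact C → C ⊆ {x | (Φ x).Nonempty} →
      ∀ l : ℝ, IsCompact {p : X × Y | p.1 ∈ C ∧ p.2 ∈ Φ p.1 ∧ f p ≤ (l : EReal)} := by
  intro C _ hC hCdom l
  have hΦ : UpperHemicontinuousOn Φ {x | (Φ x).Nonempty} :=
    .of_forall_isOpen fun x hx G hG hΦG => by
      obtain ⟨U, hU, hUG⟩ := husc x hx G hG hΦG
      exact eventually_nhdsWithin_iff.2 <|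
        mem_of_superset hU fun x' hx' hx'dom => hUG x' ⟨hx', hx'dom⟩
  have hgraph := (hΦ.mono hCdom).isCompact_graphOn (fun x hx => hcomp x (hCdom hx)) hC
  have hsublevel := (hf.mono fun p hp => hp.2).isCompact_inter_preimage_Iic hgraph (l : EReal)
  convert hsublevel using 1
  ext p
  simp only [mem_ofPred_eq, mem_inter_iff, mem_preimage, mem_Iic, and_assoc]
end

section
/- Let X, Y be metric spaces, Φ : X → 2^Y with Dom Φ ≠ ∅, and f : Gr(Φ) → ℝ̄ be K-inf-compact on Gr(Φ). Then the value function f*(x) = inf_{y ∈ Φ(x)} f(x,y) is lower semi-continuous on Dom Φ, the infimum is attained for every x ∈ Dom Φ, and for each x ∈ Dom Φ the solution set Φ*(x) = {y ∈ Φ(x) : f(x,y) = f*(x)} is compact whenever f*(x) < +∞. -/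
open Filter Topology

/-!
At a point `x` of `Dom Φ` the sublevel sets `{y ∈ Φ x | f (x, y) ≤ l}` are compact (take `C = {x}`),
and for `l` above the value `f* x` they are nonempty and decrease with `l`; their intersection is the
solution set, which is therefore nonempty and compact. For lower semicontinuity, if `xₙ → x₀` with
`f* xₙ < l`, pick `yₙ ∈ Φ xₙ` with `f (xₙ, yₙ) < l`: the pairs lie in the compact sublevel set over
`C = {x₀} ∪ {xₙ}`, so a subsequence converges to some `(x₀, y)` with `y ∈ Φ x₀` and `f (x₀, y) ≤ l`.
-/

section Argmin

variable {Y : Type*} {g : Y → EReal} {s : Set Y}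

lemma iInter_sublevel_eq_setOf_eq_biInf (hm : ⨅ y ∈ s, g y < ⊤) :
    ⋂ l : {l : ℝ // ⨅ y ∈ s, g y < l}, {y | y ∈ s ∧ g y ≤ l} =
      {y | y ∈ s ∧ g y = ⨅ y' ∈ s, g y'} := by
  obtain ⟨l₀, hl₀, -⟩ := EReal.exists_between_coe_real hm
  ext y
  simp only [Set.mem_iInter, Set.mem_ofPred_eq, Subtype.forall]
  constructor
  · intro hy
    have hys : y ∈ s := (hy l₀ hl₀).1
    refine ⟨hys, le_antisymm (le_of_forall_gt_imp_ge_of_dense fun z hz => ?_) (iInf₂_le y hys)⟩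
    obtain ⟨l, hml, hlz⟩ := EReal.exists_between_coe_real hz
    exact (hy l hml).2.trans hlz.le
  · rintro ⟨hys, hy⟩ l hl
    exact ⟨hys, hy.le.trans hl.le⟩

variable [TopologicalSpace Y] [T2Space Y]

lemma isCompact_setOf_eq_biInf (hg : ∀ l : ℝ, IsCompact {y | y ∈ s ∧ g y ≤ l})
    (hm : ⨅ y ∈ s, g y < ⊤) :
    IsCompact {y | y ∈ s ∧ g y = ⨅ y' ∈ s, g y'} := by
  obtain ⟨l₀, hl₀, -⟩ := EReal.exists_between_coe_real hm
  rw [← iInter_sublevel_eq_setOf_eq_biInf hm]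
  exact (hg l₀).of_isClosed_subset (isClosed_iInter fun l => (hg l).isClosed)
    (Set.iInter_subset_of_subset ⟨l₀, hl₀⟩ subset_rfl)

lemma exists_eq_biInf_of_isCompact_sublevel (hg : ∀ l : ℝ, IsCompact {y | y ∈ s ∧ g y ≤ l})
    (hs : s.Nonempty) :
    ∃ y ∈ s, g y = ⨅ y' ∈ s, g y' := by
  obtain hm | hm := (le_top : ⨅ y ∈ s, g y ≤ ⊤).lt_or_eq
  · obtain ⟨l₀, hl₀, -⟩ := EReal.exists_between_coe_real hm
    have : Nonempty {l : ℝ // ⨅ y ∈ s, g y < l} := ⟨⟨l₀, hl₀⟩⟩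
    have hne (l : {l : ℝ // ⨅ y ∈ s, g y < l}) : {y | y ∈ s ∧ g y ≤ l}.Nonempty := by
      obtain ⟨y, hys, hy⟩ : ∃ y ∈ s, g y < l := by
        simpa only [iInf_lt_iff, exists_prop] using l.2
      exact ⟨y, hys, hy.le⟩
    have hmono : Monotone fun l : {l : ℝ // ⨅ y ∈ s, g y < l} => {y | y ∈ s ∧ g y ≤ l} :=
      fun l l' hll' y hy => ⟨hy.1, hy.2.trans (EReal.coe_le_coe_iff.mpr hll')⟩
    obtain ⟨y, hys, hy⟩ : {y | y ∈ s ∧ g y = ⨅ y' ∈ s, g y'}.Nonempty := by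
      rw [← iInter_sublevel_eq_setOf_eq_biInf hm]
      exact IsCompact.nonempty_iInter_of_directed_nonempty_isCompact_isClosed _
        hmono.directed_ge hne (fun l => hg l) (fun l => (hg l).isClosed)
    exact ⟨y, hys, hy⟩
  · obtain ⟨y, hys⟩ := hs
    refine ⟨y, hys, ?_⟩
    rw [hm]
    exact top_le_iff.mp (hm ▸ iInf₂_le y hys)

end Argmin

section KInfCompact

variable {X Y : Type*} [TopologicalSpace X] [TopologicalSpace Y]

def IsKInfCompact (Φ : X → Set Y) (f : X × Y → EReal) : Prop :=
  ∀ C : Set X, C.Nonempty → IsCompact C → C ⊆ {x | (Φ x).Nonempty} →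
    ∀ l : ℝ, IsCompact {p : X × Y | p.1 ∈ C ∧ p.2 ∈ Φ p.1 ∧ f p ≤ (l : EReal)}

variable {Φ : X → Set Y} {f : X × Y → EReal}

lemma IsKInfCompact.isCompact_sublevel_slice (hK : IsKInfCompact Φ f) {x : X}
    (hx : (Φ x).Nonempty) (l : ℝ) : IsCompact {y | y ∈ Φ x ∧ f (x, y) ≤ l} := by
  have hcpt := (hK {x} ⟨x, rfl⟩ isCompact_singleton (by simpa using hx) l).image continuous_snd
  convert hcpt using 1
  ext y
  simp

lemma IsKInfCompact.biInf_le_of_tendsto [T2Space X] [FirstCountableTopology X]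
    [FirstCountableTopology Y] (hK : IsKInfCompact Φ f) {u : ℕ → X} {x₀ : X}
    (hu : Tendsto u atTop (𝓝 x₀)) (hx₀ : (Φ x₀).Nonempty) (hun : ∀ n, (Φ (u n)).Nonempty)
    {l : ℝ} (hl : ∀ n, ⨅ y ∈ Φ (u n), f (u n, y) < l) : ⨅ y ∈ Φ x₀, f (x₀, y) ≤ l := by
  have hsel (n : ℕ) : ∃ y ∈ Φ (u n), f (u n, y) < l := by
    simpa only [iInf_lt_iff, exists_prop] using hl n
  choose v hvΦ hvl using hsel
  have hC : insert x₀ (Set.range u) ⊆ {x | (Φ x).Nonempty} := by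
    rintro x (rfl | ⟨n, rfl⟩)
    exacts [hx₀, hun n]
  obtain ⟨p, ⟨-, hpΦ, hpl⟩, φ, hφ, hlim⟩ :=
    (hK _ (Set.insert_nonempty _ _) hu.isCompact_insert_range hC l).tendsto_subseq
      (x := fun n => (u n, v n)) fun n => ⟨Or.inr ⟨n, rfl⟩, hvΦ n, (hvl n).le⟩
  have hp : p.1 = x₀ :=
    tendsto_nhds_unique ((continuous_fst.tendsto p).comp hlim) (hu.comp hφ.tendsto_atTop)
  obtain ⟨x, y⟩ := p
  subst hp
  exact (iInf₂_le y hpΦ).trans hpl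

lemma IsKInfCompact.lowerSemicontinuousOn [T2Space X] [FirstCountableTopology X]
    [FirstCountableTopology Y] (hK : IsKInfCompact Φ f) :
    LowerSemicontinuousOn (fun x => ⨅ y ∈ Φ x, f (x, y)) {x | (Φ x).Nonempty} := by
  intro x₀ hx₀ c hc
  by_contra hev
  obtain ⟨u, hu, hlim⟩ := mem_closure_iff_seq_limit.mp
    (mem_closure_iff_frequently.mpr (frequently_nhdsWithin_iff.mp (not_eventually.mp hev)))
  obtain ⟨l, hcl, hl⟩ := EReal.exists_between_coe_real hc
  refine (hK.biInf_le_of_tendsto hlim hx₀ (fun n => (hu n).2) fun n => ?_).not_gt hl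
  exact (not_lt.mp (hu n).1).trans_lt hcl

end KInfCompact

theorem stmt5_general {X Y : Type*} [MetricSpace X] [MetricSpace Y]
    (Φ : X → Set Y)
    (f : X × Y → EReal)
    (hK : ∀ C : Set X, C.Nonempty → IsCompact C → C ⊆ {x | (Φ x).Nonempty} →
      ∀ l : ℝ, IsCompact {p : X × Y | p.1 ∈ C ∧ p.2 ∈ Φ p.1 ∧ f p ≤ (l : EReal)}) :
    LowerSemicontinuousOn (fun x => ⨅ y ∈ Φ x, f (x, y)) {x | (Φ x).Nonempty} ∧
    (∀ x ∈ {x | (Φ x).Nonempty}, ∃ y ∈ Φ x, f (x, y) = ⨅ y' ∈ Φ x, f (x, y')) ∧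
    (∀ x ∈ {x | (Φ x).Nonempty}, (⨅ y ∈ Φ x, f (x, y)) < ⊤ →
      IsCompact {y | y ∈ Φ x ∧ f (x, y) = ⨅ y' ∈ Φ x, f (x, y')}) := by
  have hK' : IsKInfCompact Φ f := hK
  exact ⟨hK'.lowerSemicontinuousOn,
    fun x hx => exists_eq_biInf_of_isCompact_sublevel (hK'.isCompact_sublevel_slice hx) hx,
    fun x hx => isCompact_setOf_eq_biInf (hK'.isCompact_sublevel_slice hx)⟩

/-- Theorem 2.1: if `f` is `K`-inf-compact on `Gr(Φ)`, then the value function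
`f* x = ⨅ y ∈ Φ x, f (x, y)` is lower semicontinuous on `Dom Φ`, the infimum is
attained, and the solution set is compact whenever `f* x < +∞`. -/
theorem stmt5 {X Y : Type*} [MetricSpace X] [MetricSpace Y]
    (Φ : X → Set Y) (hdom : {x | (Φ x).Nonempty}.Nonempty)
    (f : X × Y → EReal)
    (hK : ∀ C : Set X, C.Nonempty → IsCompact C → C ⊆ {x | (Φ x).Nonempty} →
      ∀ l : ℝ, IsCompact {p : X × Y | p.1 ∈ C ∧ p.2 ∈ Φ p.1 ∧ f p ≤ (l : EReal)}) :
    LowerSemicontinuousOn (fun x => ⨅ y ∈ Φ x, f (x, y)) {x | (Φ x).Nonempty} ∧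
    (∀ x ∈ {x | (Φ x).Nonempty}, ∃ y ∈ Φ x, f (x, y) = ⨅ y' ∈ Φ x, f (x, y')) ∧
    (∀ x ∈ {x | (Φ x).Nonempty}, (⨅ y ∈ Φ x, f (x, y)) < ⊤ →
      IsCompact {y | y ∈ Φ x ∧ f (x, y) = ⨅ y' ∈ Φ x, f (x, y')}) :=
  stmt5_general Φ f hK
end

section
/- Let X, A, B be metric spaces, Φ_A : X → S(A), Φ_B : Gr(Φ_A) → S(B) with Φ_B lower semi-continuous, and let f : Gr(Φ_B) → ℝ̄ be lower semi-continuous. Then the worst-loss function f^♯(x,a) = sup_{b ∈ Φ_B(x,a)} f(x,a,b) is lower semi-continuous on Gr(Φ_A). -/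
open Filter Topology

/-! The supremum `f♯` can only jump down at `p` if some sequence `pₙ → p` in the graph keeps
`f♯ (pₙ) ≤ y < f (p, b)`. Lower semicontinuity of `Φ_B` lets `b` be shadowed by `bₙ ∈ Φ_B (pₙ)`
clustering at `b`, and lower semicontinuity of `f` then gives `y < f (pₙ, bₙ) ≤ f♯ (pₙ)`
for some `n`. -/

theorem Filter.Tendsto.prodMk_mapClusterPt {ι X Y : Type*} [TopologicalSpace X]
    [TopologicalSpace Y] {l : Filter ι} {u : ι → X} {v : ι → Y} {x : X} {y : Y}
    (hu : Tendsto u l (𝓝 x)) (hv : MapClusterPt y l v) :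
    MapClusterPt (x, y) l fun i ↦ (u i, v i) := by
  obtain ⟨U, hUl, hvU⟩ := mapClusterPt_iff_ultrafilter.mp hv
  exact mapClusterPt_iff_ultrafilter.mpr ⟨U, hUl, (hu.mono_left hUl).prodMk_nhds hvU⟩

theorem LowerSemicontinuousWithinAt.frequently_lt_of_mapClusterPt {ι α β : Type*}
    [TopologicalSpace α] [Preorder β] {f : α → β} {s : Set α} {x : α} {l : Filter ι}
    {u : ι → α} (hf : LowerSemicontinuousWithinAt f s x) (hus : ∀ i, u i ∈ s)
    (hu : MapClusterPt x l u) {y : β} (hy : y < f x) : ∃ᶠ i in l, y < f (u i) :=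
  (hu.frequently (eventually_nhdsWithin_iff.mp (hf y hy))).mono fun i hi ↦ hi (hus i)

theorem lowerSemicontinuousWithinAt_of_forall_seq {α β : Type*} [TopologicalSpace α]
    [FirstCountableTopology α] [Preorder β] {f : α → β} {s : Set α} {x : α}
    (h : ∀ u : ℕ → α, (∀ n, u n ∈ s) → Tendsto u atTop (𝓝 x) →
      ∀ y < f x, ∃ n, y < f (u n)) :
    LowerSemicontinuousWithinAt f s x := by
  intro y hy
  by_contra hnot
  obtain ⟨u, hux, hu⟩ := exists_seq_forall_of_frequently
    ((not_eventually.mp hnot).and_eventually eventually_mem_nhdsWithin)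
  obtain ⟨n, hn⟩ := h u (fun n ↦ (hu n).2) (tendsto_nhds_of_tendsto_nhdsWithin hux) y hy
  exact (hu n).1 hn

theorem stmt6_general {X A B : Type*} [MetricSpace X] [MetricSpace A] [MetricSpace B]
    (ΦA : X → Set A)
    (ΦB : X → A → Set B)
    (hBlsc : ∀ p : X × A, p.2 ∈ ΦA p.1 →
      ∀ ps : ℕ → X × A, (∀ n, (ps n).2 ∈ ΦA (ps n).1) →
        Tendsto ps atTop (𝓝 p) →
        ∀ b ∈ ΦB p.1 p.2, ∃ bs : ℕ → B,
          (∀ n, bs n ∈ ΦB (ps n).1 (ps n).2) ∧ MapClusterPt b atTop bs)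
    (f : X × A × B → EReal)
    (hf : LowerSemicontinuousOn f
      {q : X × A × B | q.2.1 ∈ ΦA q.1 ∧ q.2.2 ∈ ΦB q.1 q.2.1}) :
    LowerSemicontinuousOn (fun p : X × A => ⨆ b ∈ ΦB p.1 p.2, f (p.1, p.2, b))
      {p : X × A | p.2 ∈ ΦA p.1} := by
  refine fun p hp ↦ lowerSemicontinuousWithinAt_of_forall_seq fun ps hps hlim y hy ↦ ?_
  obtain ⟨b, hb, hyb⟩ : ∃ b ∈ ΦB p.1 p.2, y < f (p.1, p.2, b) := by
    simpa only [lt_iSup_iff, exists_prop] using hy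
  obtain ⟨bs, hbs, hbcl⟩ := hBlsc p hp ps hps hlim b hb
  have hcl : MapClusterPt (p.1, p.2, b) atTop fun n ↦ ((ps n).1, (ps n).2, bs n) :=
    hlim.fst_nhds.prodMk_mapClusterPt (hlim.snd_nhds.prodMk_mapClusterPt hbcl)
  obtain ⟨n, hn⟩ := (LowerSemicontinuousWithinAt.frequently_lt_of_mapClusterPt
    (hf (p.1, p.2, b) ⟨hp, hb⟩) (u := fun n ↦ ((ps n).1, (ps n).2, bs n))
    (fun n ↦ ⟨hps n, hbs n⟩) hcl hyb).exists
  exact ⟨n, hn.trans_le (le_iSup₂_of_le (bs n) (hbs n) le_rfl)⟩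

/-- Theorem 3.1: if `Φ_B` is a lower semicontinuous set-valued mapping on `Gr(Φ_A)` and
`f` is lower semicontinuous on `Gr(Φ_B)`, then the worst-loss function
`f♯ (x, a) = ⨆ b ∈ Φ_B x a, f (x, a, b)` is lower semicontinuous on `Gr(Φ_A)`. -/
theorem stmt6 {X A B : Type*} [MetricSpace X] [MetricSpace A] [MetricSpace B]
    (ΦA : X → Set A) (hA : ∀ x, (ΦA x).Nonempty)
    (ΦB : X → A → Set B) (hB : ∀ x, ∀ a ∈ ΦA x, (ΦB x a).Nonempty)
    (hBlsc : ∀ p : X × A, p.2 ∈ ΦA p.1 →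
      ∀ ps : ℕ → X × A, (∀ n, (ps n).2 ∈ ΦA (ps n).1) →
        Tendsto ps atTop (𝓝 p) →
        ∀ b ∈ ΦB p.1 p.2, ∃ bs : ℕ → B,
          (∀ n, bs n ∈ ΦB (ps n).1 (ps n).2) ∧ MapClusterPt b atTop bs)
    (f : X × A × B → EReal)
    (hf : LowerSemicontinuousOn f
      {q : X × A × B | q.2.1 ∈ ΦA q.1 ∧ q.2.2 ∈ ΦB q.1 q.2.1}) :
    LowerSemicontinuousOn (fun p : X × A => ⨆ b ∈ ΦB p.1 p.2, f (p.1, p.2, b))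
      {p : X × A | p.2 ∈ ΦA p.1} :=
  stmt6_general ΦA ΦB hBlsc f hf
end

section
/- Let X, A, B be metric spaces, Φ_A : X → S(A), and Φ_B : Gr(Φ_A) → S(B) be A-lower semi-continuous. Suppose the swapped function f^{A↔B}(x,b,a) := f(x,a,b), defined on Gr(Φ_B^{A↔B}) where Gr(Φ_B^{A↔B}) = {(x,b,a) : (x,a,b) ∈ Gr(Φ_B)}, is K-inf-compact. Then the worst-loss function f^♯(x,a) = sup_{b ∈ Φ_B(x,a)} f(x,a,b) is K-inf-compact on Gr(Φ_A). -/
open Filter Topology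

/-!
Take a sequence `(xₙ, aₙ)` in a sublevel set `{f♯ ≤ l}` over a compact `C`, and pass to a
subsequence with `xₙ → x`. Any `b ∈ Φ_B(x, a)` is, by `A`-lower semicontinuity, a limit of
points `bₙ ∈ Φ_B(xₙ, aₙ)`; since `f(xₙ, aₙ, bₙ) ≤ f♯(xₙ, aₙ) ≤ l`, the triples `((xₙ, bₙ), aₙ)`
lie in a sublevel set of the swapped function over the compact set `{(x, b)} ∪ {(xₙ, bₙ)}`.
Applied once to some `b` this makes `aₙ` converge (along a subsequence) to some `a ∈ Φ_A(x)`,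
and applied to every `b ∈ Φ_B(x, a)` it gives `f(x, a, b) ≤ l`, i.e. `f♯(x, a) ≤ l`.
-/

namespace KInfCompact

variable {X Y A B : Type*}

def IsKInfCompactOn [TopologicalSpace X] [TopologicalSpace Y]
    (Ψ : X → Set Y) (g : X × Y → EReal) : Prop :=
  ∀ C : Set X, C.Nonempty → IsCompact C → C ⊆ {x | (Ψ x).Nonempty} →
    ∀ l : ℝ, IsCompact {p : X × Y | p.1 ∈ C ∧ p.2 ∈ Ψ p.1 ∧ g p ≤ l}

def IsALowerSemicontinuous [TopologicalSpace X] [TopologicalSpace B]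
    (ΦA : X → Set A) (ΦB : X → A → Set B) : Prop :=
  ∀ (x : X) (xs : ℕ → X), Tendsto xs atTop (𝓝 x) →
    ∀ as : ℕ → A, (∀ n, as n ∈ ΦA (xs n)) →
      ∀ a ∈ ΦA x, ∀ b ∈ ΦB x a,
        ∃ bs : ℕ → B, (∀ n, bs n ∈ ΦB (xs n) (as n)) ∧ MapClusterPt b atTop bs

/-- `Φ_B^{A↔B}`, whose graph is `{(x, b, a) | (x, a, b) ∈ Gr(Φ_B)}`. -/
def swapMultifunction (ΦA : X → Set A) (ΦB : X → A → Set B) (q : X × B) : Set A :=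
  {a | a ∈ ΦA q.1 ∧ q.2 ∈ ΦB q.1 a}

def swapArgs (f : X × A × B → EReal) (r : (X × B) × A) : EReal :=
  f (r.1.1, r.2, r.1.2)

noncomputable def worstLoss (ΦB : X → A → Set B) (f : X × A × B → EReal) (p : X × A) : EReal :=
  ⨆ b ∈ ΦB p.1 p.2, f (p.1, p.2, b)

lemma IsKInfCompactOn.exists_subseq_tendsto [TopologicalSpace X] [TopologicalSpace Y]
    [T2Space X] [FirstCountableTopology X] [FirstCountableTopology Y]
    {Ψ : X → Set Y} {g : X × Y → EReal} (hg : IsKInfCompactOn Ψ g)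
    {xs : ℕ → X} {x : X} (hxs : Tendsto xs atTop (𝓝 x)) (hx : (Ψ x).Nonempty)
    {ys : ℕ → Y} (hys : ∀ n, ys n ∈ Ψ (xs n)) {l : ℝ} (hl : ∀ n, g (xs n, ys n) ≤ l) :
    ∃ y ∈ Ψ x, g (x, y) ≤ l ∧ ∃ φ : ℕ → ℕ, StrictMono φ ∧ Tendsto (ys ∘ φ) atTop (𝓝 y) := by
  have hdom : insert x (Set.range xs) ⊆ {x | (Ψ x).Nonempty} := by
    rintro _ (rfl | ⟨n, rfl⟩)
    exacts [hx, ⟨ys n, hys n⟩]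
  obtain ⟨⟨x', y⟩, ⟨-, hy, hgy⟩, φ, hφ, hlim⟩ :=
    (hg _ ⟨x, Set.mem_insert _ _⟩ hxs.isCompact_insert_range hdom l).tendsto_subseq
      (x := fun n => (xs n, ys n)) fun n => ⟨Set.mem_insert_of_mem _ ⟨n, rfl⟩, hys n, hl n⟩
  obtain rfl : x' = x :=
    tendsto_nhds_unique ((continuous_fst.tendsto _).comp hlim) (hxs.comp hφ.tendsto_atTop)
  exact ⟨y, hy, hgy, φ, hφ, (continuous_snd.tendsto _).comp hlim⟩

section Metrizable

open TopologicalSpace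

variable [TopologicalSpace X] [MetrizableSpace X] [TopologicalSpace A] [MetrizableSpace A]
  [TopologicalSpace B] [MetrizableSpace B]
  {ΦA : X → Set A} {ΦB : X → A → Set B} {f : X × A × B → EReal}

lemma IsKInfCompactOn.exists_subseq_tendsto_of_swap
    (hswap : IsKInfCompactOn (swapMultifunction ΦA ΦB) (swapArgs f))
    (hlsc : IsALowerSemicontinuous ΦA ΦB)
    {xs : ℕ → X} {x : X} (hxs : Tendsto xs atTop (𝓝 x))
    {as : ℕ → A} (has : ∀ n, as n ∈ ΦA (xs n)) {l : ℝ}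
    (hl : ∀ n, ∀ b ∈ ΦB (xs n) (as n), f (xs n, as n, b) ≤ l)
    {a₀ : A} (ha₀ : a₀ ∈ ΦA x) {b : B} (hb : b ∈ ΦB x a₀) :
    ∃ a ∈ ΦA x, f (x, a, b) ≤ l ∧ ∃ φ : ℕ → ℕ, StrictMono φ ∧ Tendsto (as ∘ φ) atTop (𝓝 a) := by
  obtain ⟨bs, hbs, hbclu⟩ := hlsc x xs hxs as has a₀ ha₀ b hb
  obtain ⟨ψ, hψ, hbψ⟩ := hbclu.tendsto_subseq
  obtain ⟨a, ⟨ha, -⟩, hfa, φ, hφ, haφ⟩ :=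
    hswap.exists_subseq_tendsto ((hxs.comp hψ.tendsto_atTop).prodMk_nhds hbψ)
      ⟨a₀, ha₀, hb⟩ (ys := as ∘ ψ) (fun n => ⟨has (ψ n), hbs (ψ n)⟩)
      fun n => hl (ψ n) _ (hbs (ψ n))
  exact ⟨a, ha, hfa, ψ ∘ φ, hψ.comp hφ, haφ⟩

theorem isKInfCompactOn_worstLoss
    (hswap : IsKInfCompactOn (swapMultifunction ΦA ΦB) (swapArgs f))
    (hB : ∀ x, ∀ a ∈ ΦA x, (ΦB x a).Nonempty) (hlsc : IsALowerSemicontinuous ΦA ΦB) :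
    IsKInfCompactOn ΦA (worstLoss ΦB f) := by
  intro C _ hC hCdom l
  refine isCompact_iff_isSeqCompact.mpr fun p hp => ?_
  have hl : ∀ n, ∀ b ∈ ΦB (p n).1 (p n).2, f ((p n).1, (p n).2, b) ≤ l :=
    fun n b hb => (le_biSup (fun b => f ((p n).1, (p n).2, b)) hb).trans (hp n).2.2
  obtain ⟨x, hxC, φ, hφ, hxφ⟩ := hC.tendsto_subseq fun n => (hp n).1
  obtain ⟨a₀, ha₀⟩ := hCdom hxC
  obtain ⟨b₀, hb₀⟩ := hB x a₀ ha₀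
  obtain ⟨a, ha, -, ψ, hψ, haψ⟩ := hswap.exists_subseq_tendsto_of_swap hlsc hxφ
    (fun n => (hp (φ n)).2.1) (fun n => hl (φ n)) ha₀ hb₀
  have hxψ := hxφ.comp hψ.tendsto_atTop
  have hfa : worstLoss ΦB f (x, a) ≤ l := by
    refine iSup₂_le fun b hb => ?_
    obtain ⟨a', -, hfa', χ, hχ, ha'χ⟩ := hswap.exists_subseq_tendsto_of_swap hlsc hxψ
      (fun n => (hp (φ (ψ n))).2.1) (fun n => hl (φ (ψ n))) ha hb
    rwa [tendsto_nhds_unique ha'χ (haψ.comp hχ.tendsto_atTop)] at hfa'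
  exact ⟨(x, a), ⟨hxC, ha, hfa⟩, φ ∘ ψ, hφ.comp hψ, hxψ.prodMk_nhds haψ⟩

end Metrizable

end KInfCompact

open KInfCompact in
/-- Theorem 3.2: if `Φ_B` is `A`-lower semicontinuous and the swapped function
`f^{A↔B} (x, b, a) = f (x, a, b)` is `K`-inf-compact on `Gr(Φ_B^{A↔B})`, then the
worst-loss function `f♯ (x, a) = ⨆ b ∈ Φ_B x a, f (x, a, b)` is `K`-inf-compact on
`Gr(Φ_A)`. -/
theorem stmt7 {X A B : Type*} [MetricSpace X] [MetricSpace A] [MetricSpace B]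
    (ΦA : X → Set A) (hA : ∀ x, (ΦA x).Nonempty)
    (ΦB : X → A → Set B) (hB : ∀ x, ∀ a ∈ ΦA x, (ΦB x a).Nonempty)
    (hAlsc : ∀ (x : X) (xs : ℕ → X), Tendsto xs atTop (𝓝 x) →
      ∀ as : ℕ → A, (∀ n, as n ∈ ΦA (xs n)) →
        ∀ a ∈ ΦA x, ∀ b ∈ ΦB x a,
          ∃ bs : ℕ → B, (∀ n, bs n ∈ ΦB (xs n) (as n)) ∧ MapClusterPt b atTop bs)
    (f : X × A × B → EReal)
    (hswap : ∀ C : Set (X × B), C.Nonempty → IsCompact C →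
      C ⊆ {q : X × B | ∃ a ∈ ΦA q.1, q.2 ∈ ΦB q.1 a} →
      ∀ l : ℝ, IsCompact {r : (X × B) × A | r.1 ∈ C ∧ r.2 ∈ ΦA r.1.1 ∧
        r.1.2 ∈ ΦB r.1.1 r.2 ∧ f (r.1.1, r.2, r.1.2) ≤ (l : EReal)}) :
    ∀ C : Set X, C.Nonempty → IsCompact C →
      ∀ l : ℝ, IsCompact {p : X × A | p.1 ∈ C ∧ p.2 ∈ ΦA p.1 ∧
        (⨆ b ∈ ΦB p.1 p.2, f (p.1, p.2, b)) ≤ (l : EReal)} := by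
  have hswap' : IsKInfCompactOn (swapMultifunction ΦA ΦB) (swapArgs f) :=
    fun C hC₀ hC hCdom l => by
      simpa only [swapMultifunction, swapArgs, Set.mem_ofPred_eq, and_assoc]
        using hswap C hC₀ hC hCdom l
  exact fun C hC₀ hC => isKInfCompactOn_worstLoss hswap' hB hAlsc C hC₀ hC fun x _ => hA x
end

section
/- Let X, A, B be metric spaces, Φ_A : X → S(A) lower semi-continuous, and f : Gr(Φ_B) → ℝ̄ K-sup-compact on Gr(Φ_B) (i.e., −f is K-inf-compact). Then the minimax function v^♯(x) = inf_{a ∈ Φ_A(x)} sup_{b ∈ Φ_B(x,a)} f(x,a,b) is upper semi-continuous on X, and the suprema over b are attained. -/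
/-!
If `v♯` failed to be upper semicontinuous at `x`, there would be `xₙ → x`
with `v♯(xₙ) ≥ y > v♯(x)`; pick `a ∈ Φ_A(x)` and a real `l` with
`sup_b f(x, a, b) < l < y`. Lower semicontinuity of `Φ_A` gives `aₙ ∈ Φ_A(xₙ)` clustering at `a`,
and `v♯(xₙ) > l` gives `bₙ ∈ Φ_B(xₙ, aₙ)` with `f(xₙ, aₙ, bₙ) ≥ l`. Along a subsequence
`(xₙ, aₙ) → (x, a)`, and the compact set `{(x, a)} ∪ {(xₙ, aₙ)}` makes the points `(xₙ, aₙ, bₙ)`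
lie in a compact superlevel set of `f`, so they accumulate at some `(x, a, b)` with
`f(x, a, b) ≥ l`, a contradiction. Attainment of the suprema is the Cantor intersection theorem
applied to the compact superlevel sets of `b ↦ f(x, a, b)`.
-/

open Filter Topology Set

theorem exists_mem_eq_biSup_of_isCompact_superlevel {β : Type*} [TopologicalSpace β] [T2Space β]
    {s : Set β} {g : β → EReal} (hs : s.Nonempty)
    (hg : ∀ l : ℝ, IsCompact {b | b ∈ s ∧ (l : EReal) ≤ g b}) :
    ∃ b ∈ s, g b = ⨆ b ∈ s, g b := by
  set S := ⨆ b ∈ s, g b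
  suffices ∃ b ∈ s, S ≤ g b by
    obtain ⟨b, hb, hSb⟩ := this
    exact ⟨b, hb, le_antisymm (le_biSup g hb) hSb⟩
  rcases eq_bot_or_bot_lt S with hS | hS
  · obtain ⟨b, hb⟩ := hs
    exact ⟨b, hb, hS ▸ bot_le⟩
  obtain ⟨c₀, -, hc₀⟩ := EReal.exists_between_coe_real hS
  have : Nonempty {c : ℝ // (c : EReal) < S} := ⟨⟨c₀, hc₀⟩⟩
  let t : {c : ℝ // (c : EReal) < S} → Set β := fun c => {b | b ∈ s ∧ (c.1 : EReal) ≤ g b}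
  have ht_anti : Antitone t := fun c c' hcc' b hb =>
    ⟨hb.1, le_trans (EReal.coe_le_coe_iff.2 hcc') hb.2⟩
  have ht_ne (c) : (t c).Nonempty := by
    obtain ⟨b, hb, hcb⟩ := lt_biSup_iff.1 c.2
    exact ⟨b, hb, hcb.le⟩
  obtain ⟨b, hb⟩ := IsCompact.nonempty_iInter_of_directed_nonempty_isCompact_isClosed t
    ht_anti.directed_ge ht_ne (fun c => hg c) (fun c => (hg c).isClosed)
  rw [mem_iInter] at hb
  refine ⟨b, (hb ⟨c₀, hc₀⟩).1, le_of_forall_lt fun c hc => ?_⟩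
  obtain ⟨r, hcr, hrS⟩ := EReal.exists_between_coe_real hc
  exact hcr.trans_le (hb ⟨r, hrS⟩).2

section KSupCompact

variable {X A B : Type*} [TopologicalSpace X] [TopologicalSpace A] [TopologicalSpace B]

def IsKSupCompactOn (ΦA : X → Set A) (ΦB : X → A → Set B) (f : X × A × B → EReal) : Prop :=
  ∀ C : Set (X × A), C.Nonempty → IsCompact C → C ⊆ {p : X × A | p.2 ∈ ΦA p.1} →
    ∀ l : ℝ, IsCompact {q : (X × A) × B | q.1 ∈ C ∧ q.2 ∈ ΦB q.1.1 q.1.2 ∧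
      (l : EReal) ≤ f (q.1.1, q.1.2, q.2)}

variable {ΦA : X → Set A} {ΦB : X → A → Set B} {f : X × A × B → EReal}

theorem IsKSupCompactOn.isCompact_superlevel_fiber (hf : IsKSupCompactOn ΦA ΦB f) {x : X} {a : A}
    (ha : a ∈ ΦA x) (l : ℝ) : IsCompact {b | b ∈ ΦB x a ∧ (l : EReal) ≤ f (x, a, b)} := by
  have hK := hf {(x, a)} (singleton_nonempty _) isCompact_singleton
    (singleton_subset_iff.2 ha) l
  convert hK.image continuous_snd using 1
  ext b
  simp

theorem IsKSupCompactOn.exists_eq_biSup (hf : IsKSupCompactOn ΦA ΦB f) [T2Space B] {x : X} {a : A}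
    (ha : a ∈ ΦA x) (hne : (ΦB x a).Nonempty) :
    ∃ b ∈ ΦB x a, f (x, a, b) = ⨆ b' ∈ ΦB x a, f (x, a, b') :=
  exists_mem_eq_biSup_of_isCompact_superlevel hne (hf.isCompact_superlevel_fiber ha)

variable [FirstCountableTopology X] [FirstCountableTopology A] [FirstCountableTopology B]
  [T2Space X] [T2Space A]

theorem IsKSupCompactOn.exists_mem_superlevel_of_tendsto (hf : IsKSupCompactOn ΦA ΦB f)
    {u : ℕ → X × A} {p : X × A} (hu : Tendsto u atTop (𝓝 p)) (hp : p.2 ∈ ΦA p.1)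
    (hu_mem : ∀ n, (u n).2 ∈ ΦA (u n).1) {l : ℝ} {bs : ℕ → B}
    (hbs : ∀ n, bs n ∈ ΦB (u n).1 (u n).2) (hl : ∀ n, (l : EReal) ≤ f ((u n).1, (u n).2, bs n)) :
    ∃ b ∈ ΦB p.1 p.2, (l : EReal) ≤ f (p.1, p.2, b) := by
  have hK := hf _ ⟨p, mem_insert _ _⟩ hu.isCompact_insert_range
    (by rintro _ (rfl | ⟨n, rfl⟩); exacts [hp, hu_mem n]) l
  obtain ⟨q, ⟨-, hqΦ, hql⟩, ψ, hψ, hψq⟩ :=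
    hK.tendsto_subseq (x := fun n => (u n, bs n)) fun n =>
      ⟨mem_insert_of_mem _ ⟨n, rfl⟩, hbs n, hl n⟩
  have hq : q.1 = p :=
    tendsto_nhds_unique ((continuous_fst.tendsto q).comp hψq) (hu.comp hψ.tendsto_atTop)
  exact ⟨q.2, hq ▸ hqΦ, hq ▸ hql⟩

theorem IsKSupCompactOn.upperSemicontinuous_biInf_biSup (hf : IsKSupCompactOn ΦA ΦB f)
    (hΦA : ∀ (x : X) (xs : ℕ → X), Tendsto xs atTop (𝓝 x) →
      ∀ a ∈ ΦA x, ∃ as : ℕ → A, (∀ n, as n ∈ ΦA (xs n)) ∧ MapClusterPt a atTop as) :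
    UpperSemicontinuous fun x => ⨅ a ∈ ΦA x, ⨆ b ∈ ΦB x a, f (x, a, b) := by
  intro x y hy
  by_contra hfreq
  rw [not_eventually] at hfreq
  obtain ⟨xs, hxs, hyxs⟩ := exists_seq_forall_of_frequently hfreq
  simp only [not_lt] at hyxs
  simp only [iInf_lt_iff] at hy
  obtain ⟨a, ha, hay⟩ := hy
  obtain ⟨l, hal, hly⟩ := EReal.exists_between_coe_real hay
  obtain ⟨as, has, hclus⟩ := hΦA x xs hxs a ha
  obtain ⟨φ, hφ, hasφ⟩ := hclus.tendsto_subseq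
  have hlarge (n : ℕ) : ∃ b ∈ ΦB (xs (φ n)) (as (φ n)), (l : EReal) < f (xs (φ n), as (φ n), b) :=
    lt_biSup_iff.1 (hly.trans_le ((hyxs (φ n)).trans (biInf_le _ (has (φ n)))))
  choose bs hbs hlbs using hlarge
  obtain ⟨b, hb, hlb⟩ := hf.exists_mem_superlevel_of_tendsto
    (u := fun n => (xs (φ n), as (φ n))) ((hxs.comp hφ.tendsto_atTop).prodMk_nhds hasφ) ha
    (fun n => has (φ n)) hbs (fun n => (hlbs n).le)
  exact hal.not_ge (hlb.trans (le_biSup (fun b => f (x, a, b)) hb))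

end KSupCompact

theorem stmt9_general {X A B : Type*} [MetricSpace X] [MetricSpace A] [MetricSpace B]
    (ΦA : X → Set A)
    (ΦB : X → A → Set B) (hB : ∀ x, ∀ a ∈ ΦA x, (ΦB x a).Nonempty)
    (hAlscmap : ∀ (x : X) (xs : ℕ → X), Tendsto xs atTop (𝓝 x) →
      ∀ a ∈ ΦA x, ∃ as : ℕ → A, (∀ n, as n ∈ ΦA (xs n)) ∧ MapClusterPt a atTop as)
    (f : X × A × B → EReal)
    (hsup : ∀ C : Set (X × A), C.Nonempty → IsCompact C →
      C ⊆ {p : X × A | p.2 ∈ ΦA p.1} →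
      ∀ l : ℝ, IsCompact {q : (X × A) × B | q.1 ∈ C ∧ q.2 ∈ ΦB q.1.1 q.1.2 ∧
        (l : EReal) ≤ f (q.1.1, q.1.2, q.2)}) :
    UpperSemicontinuous (fun x => ⨅ a ∈ ΦA x, ⨆ b ∈ ΦB x a, f (x, a, b)) ∧
    (∀ x : X, ∀ a ∈ ΦA x, ∃ b ∈ ΦB x a,
      f (x, a, b) = ⨆ b' ∈ ΦB x a, f (x, a, b')) :=
  ⟨IsKSupCompactOn.upperSemicontinuous_biInf_biSup hsup hAlscmap,
    fun x a ha => IsKSupCompactOn.exists_eq_biSup hsup ha (hB x a ha)⟩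

/-- Theorem 3.4: if `Φ_A` is lower semicontinuous and `f` is `K`-sup-compact on
`Gr(Φ_B)`, then the minimax function `v♯` is upper semicontinuous on `X` and the
suprema over `b` are attained. -/
theorem stmt9 {X A B : Type*} [MetricSpace X] [MetricSpace A] [MetricSpace B]
    (ΦA : X → Set A) (hA : ∀ x, (ΦA x).Nonempty)
    (ΦB : X → A → Set B) (hB : ∀ x, ∀ a ∈ ΦA x, (ΦB x a).Nonempty)
    (hAlscmap : ∀ (x : X) (xs : ℕ → X), Tendsto xs atTop (𝓝 x) →
      ∀ a ∈ ΦA x, ∃ as : ℕ → A, (∀ n, as n ∈ ΦA (xs n)) ∧ MapClusterPt a atTop as)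
    (f : X × A × B → EReal)
    (hsup : ∀ C : Set (X × A), C.Nonempty → IsCompact C →
      C ⊆ {p : X × A | p.2 ∈ ΦA p.1} →
      ∀ l : ℝ, IsCompact {q : (X × A) × B | q.1 ∈ C ∧ q.2 ∈ ΦB q.1.1 q.1.2 ∧
        (l : EReal) ≤ f (q.1.1, q.1.2, q.2)}) :
    UpperSemicontinuous (fun x => ⨅ a ∈ ΦA x, ⨆ b ∈ ΦB x a, f (x, a, b)) ∧
    (∀ x : X, ∀ a ∈ ΦA x, ∃ b ∈ ΦB x a,
      f (x, a, b) = ⨆ b' ∈ ΦB x a, f (x, a, b')) :=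
  stmt9_general ΦA ΦB hB hAlscmap f hsup
end

section
/- Let A and B be nonempty convex subsets of vector spaces and f : A × B → ℝ be convex in a for each b and concave in b for each a. Then sup_{b ∈ B} inf_{a ∈ A} f(a,b) = sup over finite subsets F ⊆ B of inf_{a ∈ A} max_{b ∈ F} f(a,b). -/
/-!
The content is the finite version: if `c ≤ maxᵢ f (a, bᵢ)` on `s` for finitely many `bᵢ ∈ t`,
then `c ≤ f (a, b)` on `s` for a single `b ∈ t`. For two convex functions `g, h` with
`c ≤ max g h` on `s`, some `λ ∈ [0, 1]` has `c ≤ λ g + (1 - λ) h` on `s`: otherwise the `λ`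
failing at a point where `g < c`, resp. `h < c`, form two open sets covering `[0, 1]`; they
meet, and a convex combination of the two witnessing points violates `c ≤ max g h`.
Applied to `f (·, b₁)` and `maxᵢ≥₂ f (·, bᵢ)`, this replaces `f` by the convex-concave
`λ f (a, b₁) + (1 - λ) f (a, b)` with one point fewer; concavity in `b` turns the point found
by induction into `λ b₁ + (1 - λ) b`.
-/

open Set

lemma exists_mem_Icc_combo_eq_combo {p q r u : ℝ} (hpq : p < q) (hur : u < r) :
    ∃ w ∈ Icc (0 : ℝ) 1, w * p + (1 - w) * r = w * q + (1 - w) * u := by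
  have hpos : 0 < q - p + (r - u) := by linarith
  refine ⟨(r - u) / (q - p + (r - u)), ⟨by positivity, ?_⟩, ?_⟩
  · rw [div_le_one hpos]; linarith
  · field_simp; ring

section TwoFunctions

variable {E : Type*} [AddCommGroup E] [Module ℝ E] {s : Set E} {g h : E → ℝ} {c : ℝ}

lemma le_combo_or_le_combo_of_le_max (hs : Convex ℝ s) (hg : ConvexOn ℝ s g)
    (hh : ConvexOn ℝ s h) (hmax : ∀ a ∈ s, c ≤ max (g a) (h a)) {a b : E} (ha : a ∈ s)
    (hb : b ∈ s) (hga : g a < c) (hhb : h b < c) (l : ℝ) :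
    c ≤ l * g a + (1 - l) * h a ∨ c ≤ l * g b + (1 - l) * h b := by
  have hha : c ≤ h a := (le_max_iff.1 (hmax a ha)).resolve_left hga.not_ge
  have hgb : c ≤ g b := (le_max_iff.1 (hmax b hb)).resolve_right hhb.not_ge
  obtain ⟨w, ⟨hw0, hw1⟩, hw⟩ :=
    exists_mem_Icc_combo_eq_combo (hga.trans_le hha) (hhb.trans_le hgb)
  -- At `x = w a + (1 - w) b` the convexity bounds for `g` and `h` coincide; their common value
  -- is `≥ c` and is the `w`-average of the two `l`-combinations.
  have hx : w • a + (1 - w) • b ∈ s := hs ha hb hw0 (by linarith) (by ring)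
  have hgx : g (w • a + (1 - w) • b) ≤ w * g a + (1 - w) * g b :=
    hg.2 ha hb hw0 (by linarith) (by ring)
  have hhx : h (w • a + (1 - w) • b) ≤ w * h a + (1 - w) * h b :=
    hh.2 ha hb hw0 (by linarith) (by ring)
  have hcx : c ≤ w * g a + (1 - w) * g b :=
    (hmax _ hx).trans (max_le hgx (hw ▸ hhx))
  by_contra! hlt
  nlinarith [hlt.1, hlt.2]

theorem ConvexOn.exists_forall_le_combo_of_le_max (hs : Convex ℝ s) (hg : ConvexOn ℝ s g)
    (hh : ConvexOn ℝ s h) (hmax : ∀ a ∈ s, c ≤ max (g a) (h a)) :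
    ∃ l ∈ Icc (0 : ℝ) 1, ∀ a ∈ s, c ≤ l * g a + (1 - l) * h a := by
  by_contra! hcon
  let failAt (p : E → Prop) : Set ℝ :=
    ⋃ a ∈ {a | a ∈ s ∧ p a}, {l | l * g a + (1 - l) * h a < c}
  have hopen (p : E → Prop) : IsOpen (failAt p) :=
    isOpen_biUnion fun a _ => isOpen_lt (by fun_prop) continuous_const
  have hmem {p : E → Prop} {l : ℝ} :
      l ∈ failAt p ↔ ∃ a, (a ∈ s ∧ p a) ∧ l * g a + (1 - l) * h a < c := by
    simp only [failAt, mem_iUnion₂, exists_prop, mem_ofPred_eq]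
  have hcover : Icc (0 : ℝ) 1 ⊆ failAt (g · < c) ∪ failAt (h · < c) := by
    intro l hl
    obtain ⟨a, ha, hlt⟩ := hcon l hl
    by_cases hga : g a < c
    · exact Or.inl (hmem.2 ⟨a, ⟨ha, hga⟩, hlt⟩)
    · refine Or.inr (hmem.2 ⟨a, ⟨ha, ?_⟩, hlt⟩)
      by_contra hha
      nlinarith [hl.1, hl.2]
  have hone : (1 : ℝ) ∈ failAt (g · < c) := by
    obtain ⟨a, ha, hlt⟩ := hcon 1 (right_mem_Icc.2 zero_le_one)
    exact hmem.2 ⟨a, ⟨ha, by linarith⟩, hlt⟩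
  have hzero : (0 : ℝ) ∈ failAt (h · < c) := by
    obtain ⟨a, ha, hlt⟩ := hcon 0 (left_mem_Icc.2 zero_le_one)
    exact hmem.2 ⟨a, ⟨ha, by linarith⟩, hlt⟩
  obtain ⟨l, hl, hlg, hlh⟩ := isPreconnected_Icc _ _ (hopen _) (hopen _) hcover
    ⟨1, right_mem_Icc.2 zero_le_one, hone⟩ ⟨0, left_mem_Icc.2 zero_le_one, hzero⟩
  obtain ⟨a, ⟨ha, hga⟩, hla⟩ := hmem.1 hlg
  obtain ⟨b, ⟨hb, hhb⟩, hlb⟩ := hmem.1 hlh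
  rcases le_combo_or_le_combo_of_le_max hs hg hh hmax ha hb hga hhb l with hle | hle
  · exact hla.not_ge hle
  · exact hlb.not_ge hle

end TwoFunctions

theorem ConvexOn.finset_sup' {E ι : Type*} [AddCommGroup E] [Module ℝ E] {s : Set E}
    {g : ι → E → ℝ} {S : Finset ι} (hS : S.Nonempty) (hg : ∀ i ∈ S, ConvexOn ℝ s (g i)) :
    ConvexOn ℝ s fun a => S.sup' hS fun i => g i a := by
  induction hS using Finset.Nonempty.cons_induction with
  | singleton i => simpa using hg i (Finset.mem_singleton_self i)
  | cons i S hiS hS ih =>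
    simp only [Finset.sup'_cons hS]
    exact (hg i (Finset.mem_cons_self i S)).sup (ih fun j hj => hg j (Finset.mem_cons_of_mem hj))

section ConvexConcave

variable {E F : Type*} [AddCommGroup E] [Module ℝ E] [AddCommGroup F] [Module ℝ F]
  {s : Set E} {t : Set F} {f : E → F → ℝ}

theorem exists_mem_forall_le_of_forall_le_sup' (hs : Convex ℝ s) (ht : Convex ℝ t)
    (hconv : ∀ b ∈ t, ConvexOn ℝ s (f · b)) (hconc : ∀ a ∈ s, ConcaveOn ℝ t (f a))
    {S : Finset F} (hS : S.Nonempty) (hSt : ↑S ⊆ t) {c : ℝ}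
    (hc : ∀ a ∈ s, c ≤ S.sup' hS (f a)) :
    ∃ b ∈ t, ∀ a ∈ s, c ≤ f a b := by
  induction hS using Finset.Nonempty.cons_induction generalizing f with
  | singleton b => exact ⟨b, hSt (by simp), fun a ha => by simpa using hc a ha⟩
  | cons b₀ S hb₀S hS ih =>
    have hb₀ : b₀ ∈ t := hSt (by simp)
    have hSt' : ↑S ⊆ t := fun b hb => hSt (by simp [Finset.mem_coe.1 hb])
    obtain ⟨l, ⟨hl0, hl1⟩, hl⟩ := (hconv b₀ hb₀).exists_forall_le_combo_of_le_max hs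
      (ConvexOn.finset_sup' hS fun b hb => hconv b (hSt' hb))
      fun a ha => by simpa only [Finset.sup'_cons hS] using hc a ha
    obtain ⟨b₁, hb₁, hb₁c⟩ := ih (f := fun a b => l * f a b₀ + (1 - l) * f a b)
      (fun b hb => ((hconv b₀ hb₀).smul hl0).add ((hconv b hb).smul (sub_nonneg.2 hl1)))
      (fun a ha => (concaveOn_const _ ht).add ((hconc a ha).smul (sub_nonneg.2 hl1))) hSt'
      fun a ha => by
        obtain ⟨b, hb, hbmax⟩ := Finset.exists_mem_eq_sup' hS (f a)
        exact (hbmax ▸ hl a ha).trans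
          (Finset.le_sup' (fun b => l * f a b₀ + (1 - l) * f a b) hb)
    refine ⟨l • b₀ + (1 - l) • b₁, ht hb₀ hb₁ hl0 (sub_nonneg.2 hl1) (by ring), fun a ha => ?_⟩
    exact (hb₁c a ha).trans ((hconc a ha).2 hb₀ hb₁ hl0 (sub_nonneg.2 hl1) (by ring))

end ConvexConcave

theorem stmt17_general {E F : Type*} [AddCommGroup E] [Module ℝ E] [AddCommGroup F] [Module ℝ F]
    (s : Set E) (t : Set F) (hs : Convex ℝ s) (ht : Convex ℝ t)
    (f : E × F → ℝ)
    (hconv : ∀ b ∈ t, ConvexOn ℝ s fun a => f (a, b))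
    (hconc : ∀ a ∈ s, ConcaveOn ℝ t fun b => f (a, b)) :
    (⨆ b ∈ t, ⨅ a ∈ s, ((f (a, b) : ℝ) : EReal)) =
      ⨆ S : Finset F, ⨆ hS : ↑S ⊆ t ∧ S.Nonempty,
        ⨅ a ∈ s, ((S.sup' hS.2 fun b => f (a, b) : ℝ) : EReal) := by
  apply le_antisymm
  · refine iSup₂_le fun b hb => le_iSup₂_of_le {b} ⟨by simpa using hb, by simp⟩ ?_
    simp
  · refine iSup₂_le fun S hS => le_of_not_gt fun hlt => ?_
    obtain ⟨c, hc_gt, hc_lt⟩ := EReal.exists_between_coe_real hlt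
    obtain ⟨b, hb, hbc⟩ := exists_mem_forall_le_of_forall_le_sup' (f := fun a b => f (a, b))
      hs ht hconv hconc hS.2 hS.1 fun a ha =>
        EReal.coe_le_coe_iff.1 (hc_lt.le.trans (iInf₂_le a ha))
    exact hc_gt.not_ge <|
      le_iSup₂_of_le b hb (le_iInf₂ fun a ha => EReal.coe_le_coe_iff.2 (hbc a ha))

/-- Aubin–Ekeland lopsided minimax theorem (Theorem 6.2.2): for nonempty convex sets
`s ⊆ E`, `t ⊆ F` and `f : E × F → ℝ` convex in the first variable on `s` and concave in
the second variable on `t`,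
`sup_{b ∈ t} inf_{a ∈ s} f (a, b) = sup_{F finite ⊆ t} inf_{a ∈ s} max_{b ∈ F} f (a, b)`
(computed in the extended reals). -/
theorem stmt17 {E F : Type*} [AddCommGroup E] [Module ℝ E] [AddCommGroup F] [Module ℝ F]
    (s : Set E) (t : Set F) (hs : Convex ℝ s) (ht : Convex ℝ t)
    (hsne : s.Nonempty) (htne : t.Nonempty)
    (f : E × F → ℝ)
    (hconv : ∀ b ∈ t, ConvexOn ℝ s fun a => f (a, b))
    (hconc : ∀ a ∈ s, ConcaveOn ℝ t fun b => f (a, b)) :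
    (⨆ b ∈ t, ⨅ a ∈ s, ((f (a, b) : ℝ) : EReal)) =
      ⨆ S : Finset F, ⨆ hS : ↑S ⊆ t ∧ S.Nonempty,
        ⨅ a ∈ s, ((S.sup' hS.2 fun b => f (a, b) : ℝ) : EReal) :=
  stmt17_general s t hs ht f hconv hconc
end
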